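/- arXiv:math/0610027 — 2 statements merged into one kernel-verified Lean document; each statement's English description precedes it below -/
import Mathlib

section
/- Let S = {F_t}_{t≥0} be a one-parameter continuous semigroup on Δ generated by a holomorphic function f : Δ → ℂ, and let τ ∈ ∂Δ be a boundary null point of f. Assume that for each t > 0 the unrestricted limit lim_{z→τ, z∈Δ} F_t(z) exists, and that the unrestricted limits β := lim_{z→τ, z∈Δ} f′(z) and α := lim_{z→τ, z∈Δ} f″(z) exist finitely. Then for each t ≥ 0 the unrestricted limit lim_{z→τ, z∈Δ} F_t″(z) exists; it equals −αt if β = 0, and equals (α/β)·e^{−βt}·(e^{−βt} − 1) if β ≠ 0. -/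
open Complex Filter Set

noncomputable section

/-- The open unit disk in the complex plane. -/
def unitDisk : Set ℂ := {z : ℂ | ‖z‖ < 1}

/-- The Stolz angle at a boundary point `τ` with half-opening `α`. -/
def stolzAngle (τ : ℂ) (α : ℝ) : Set ℂ :=
  {z ∈ unitDisk | |Complex.arg (1 - (starRingEnd ℂ) τ * z)| < α}

/-- `h` has angular limit `L` at `τ`: `h z → L` as `z → τ` in every Stolz angle. -/
def AngularLimit (h : ℂ → ℂ) (τ L : ℂ) : Prop :=
  ∀ α : ℝ, 0 < α → α < Real.pi / 2 →
    Tendsto h (nhdsWithin τ (stolzAngle τ α)) (nhds L)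

/-- A one-parameter continuous semigroup of holomorphic self-mappings of the unit disk. -/
structure ContSemigroupOn (F : ℝ → ℂ → ℂ) : Prop where
  holo : ∀ t : ℝ, 0 ≤ t → DifferentiableOn ℂ (F t) unitDisk
  maps : ∀ t : ℝ, 0 ≤ t → MapsTo (F t) unitDisk unitDisk
  comp : ∀ s : ℝ, 0 ≤ s → ∀ t : ℝ, 0 ≤ t → ∀ z ∈ unitDisk, F (t + s) z = F t (F s z)
  cont : ∀ z ∈ unitDisk, Tendsto (fun t : ℝ => F t z) (nhdsWithin 0 (Set.Ioi 0)) (nhds z)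

/-- `f` is the infinitesimal generator of the semigroup `F`:
for each `z ∈ Δ`, `u(t) = F t z` solves `u' + f(u) = 0`, `u 0 = z`. -/
def Generates (f : ℂ → ℂ) (F : ℝ → ℂ → ℂ) : Prop :=
  ∀ z ∈ unitDisk, F 0 z = z ∧
    ∀ t : ℝ, 0 ≤ t →
      HasDerivWithinAt (fun s : ℝ => F s z) (-(f (F t z))) (Set.Ici 0) t

/-- `τ` is a boundary null point of `f`: `f (r τ) → 0` as `r → 1⁻`. -/
def BoundaryNullPoint (f : ℂ → ℂ) (τ : ℂ) : Prop :=
  Tendsto (fun r : ℝ => f ((r : ℂ) * τ)) (nhdsWithin 1 (Set.Iio 1)) (nhds 0)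

/-- An automorphism of the unit disk: a holomorphic bijection of the disk onto itself. -/
def IsDiskAutomorphism (F : ℂ → ℂ) : Prop :=
  DifferentiableOn ℂ F unitDisk ∧ BijOn F unitDisk unitDisk

/-- The Möbius involution `m_τ(z) = (τ - z)/(1 - τ̄ z)`. -/
def mobius (τ z : ℂ) : ℂ := (τ - z) / (1 - (starRingEnd ℂ) τ * z)

/-!
Differentiating `F (t + s) z = F t (F s z)` at `s = 0` gives `F_t'(z) f(z) = f(F_t z)`, and
differentiating this in `z` gives `F_t''(z) f(z) = F_t'(z) (f'(F_t z) - f'(z))`. Along a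
trajectory, `s ↦ f(F_s z)` solves the linear equation `φ' = -f'(F_s z) φ`, so with
`I_s(z) = ∫₀ˢ f'(F_u z) du` and `J(z) = ∫₀ᵗ exp(-I_u(z)) du` we get
`F_t'(z) = exp(-I_t(z))` where `f z ≠ 0`, and `F_t z - z = -f(z) J(z)`. Hence
`F_t''(z) = exp(-I_t(z)) (-α J(z) + R(z))` with `R = (f'(F_t z) - f'(z) - α (F_t z - z)) / f(z)`.

As `f` vanishes radially at `τ` and `f'` is bounded near `τ`, `|f w| ≤ M |w - τ|` there, and a
Gronwall barrier keeps the whole trajectory `F_s z`, `0 ≤ s ≤ t`, near `τ` once `z` is. So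
`I_s(z) → β s` uniformly in `s`, giving `exp(-I_t) → e^{-βt}` and `J → ∫₀ᵗ e^{-βu} du`, while
`f'' → α` makes `f'(F_t z) - f'(z) - α (F_t z - z) = o(F_t z - z) = o(f z)`, i.e. `R → 0`.
Finally the zeros of `f ≢ 0` are isolated and `F_t''` is continuous, so the limit taken along
`f ≠ 0` is the unrestricted one; if `f ≡ 0` every `F_t` is the identity.
-/

open MeasureTheory Metric Bornology Topology

/-- The barrier `dist (u 0) p * exp ((M + 1) * s)` grows at rate `M + 1` rather than `M` so that
it is strictly faster than `u` wherever the two meet, as the fencing lemma requires. -/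
theorem dist_le_mul_exp_of_hasDerivWithinAt {E : Type*} [NormedAddCommGroup E] [NormedSpace ℝ E]
    {u u' : ℝ → E} {p : E} {M δ t : ℝ} (hM : 0 ≤ M) (hu : ContinuousOn u (Icc 0 t))
    (hu' : ∀ s ∈ Ico 0 t, HasDerivWithinAt u (u' s) (Ici s) s)
    (hbound : ∀ s ∈ Ico 0 t, dist (u s) p < δ → ‖u' s‖ ≤ M * dist (u s) p)
    (h0 : 0 < dist (u 0) p) (hsmall : dist (u 0) p * Real.exp ((M + 1) * t) < δ) :
    ∀ s ∈ Icc 0 t, dist (u s) p ≤ dist (u 0) p * Real.exp ((M + 1) * s) := by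
  set d := dist (u 0) p
  have hB : ∀ s, HasDerivAt (fun s => d * Real.exp ((M + 1) * s))
      (d * Real.exp ((M + 1) * s) * (M + 1)) s := fun s => by
    simpa [mul_assoc, mul_comm, mul_left_comm] using
      (((hasDerivAt_id s).const_mul (M + 1)).exp).const_mul d
  intro s hs
  simpa only [dist_eq_norm] using image_norm_le_of_norm_deriv_right_lt_deriv_boundary
    (f := fun s => u s - p) (hu.sub continuousOn_const) (fun s hs => (hu' s hs).sub_const p)
    (by simp [d, dist_eq_norm]) hB (fun x hx hx_eq => by
      have hBx : 0 < d * Real.exp ((M + 1) * x) := by positivity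
      have hsmall' : d * Real.exp ((M + 1) * x) < δ :=
        lt_of_le_of_lt (by gcongr; exact hx.2.le) hsmall
      rw [← dist_eq_norm] at hx_eq
      calc ‖u' x‖ ≤ M * dist (u x) p := hbound x hx (hx_eq ▸ hsmall')
        _ < d * Real.exp ((M + 1) * x) * (M + 1) := by rw [hx_eq]; nlinarith) hs

theorem eq_mul_exp_integral_of_hasDerivWithinAt {φ a : ℝ → ℂ} (ha : ContinuousOn a (Ici 0))
    (hφ : ContinuousOn φ (Ici 0)) (hφ' : ∀ s ≥ 0, HasDerivWithinAt φ (a s * φ s) (Ici s) s)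
    {s : ℝ} (hs : 0 ≤ s) : φ s = φ 0 * cexp (∫ u in (0 : ℝ)..s, a u) := by
  set A : ℝ → ℂ := fun x => ∫ u in (0 : ℝ)..x, a u
  have hA : ∀ x ≥ 0, HasDerivWithinAt A (a x) (Ici x) x := fun x hx =>
    intervalIntegral.integral_hasDerivWithinAt_right
      ((ha.mono fun u hu => by simp_all).intervalIntegrable)
      ((ha.mono (Ioi_subset_Ici hx)).stronglyMeasurableAtFilter_nhdsWithin measurableSet_Ioi x)
      ((ha x hx).mono (Ioi_subset_Ici hx))
  have hAc : ContinuousOn A (Icc 0 s) := by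
    have := intervalIntegral.continuousOn_primitive_interval (a := 0) (b := s) (μ := volume)
      (ha.mono fun u hu => by simp_all).integrableOn_Icc
    rwa [uIcc_of_le hs] at this
  have hconst := constant_of_has_deriv_right_zero (f := fun x => φ x * cexp (-A x))
    ((hφ.mono Icc_subset_Ici_self).mul (continuous_exp.comp_continuousOn hAc.neg))
    (fun x hx => by
      have := (hφ' x hx.1).mul (hA x hx.1).neg.cexp
      exact this.congr_deriv (by simp only [Pi.neg_apply]; ring)) s ⟨hs, le_rfl⟩
  simp only [A, intervalIntegral.integral_same, neg_zero, Complex.exp_zero, mul_one] at hconst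
  rw [← hconst, mul_assoc, ← Complex.exp_add, neg_add_cancel, Complex.exp_zero, mul_one]

theorem tendstoUniformlyOn_comp_of_forall_eventually_mem {ι α β Y : Type*} [UniformSpace Y]
    {l : Filter ι} {l' : Filter β} {Φ : ι → α → β} {s : Set α}
    (hΦ : ∀ V ∈ l', ∀ᶠ i in l, ∀ x ∈ s, Φ i x ∈ V) {h : β → Y} {c : Y}
    (hh : Tendsto h l' (𝓝 c)) :
    TendstoUniformlyOn (fun i x => h (Φ i x)) (fun _ => c) l s := fun _u hu =>
  hΦ _ (hh (mem_nhds_left c hu))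

theorem TendstoUniformlyOn.intervalIntegral_primitive {ι E : Type*} [NormedAddCommGroup E]
    [NormedSpace ℝ E] {l : Filter ι} {G : ι → ℝ → E} {g : ℝ → E} {a b : ℝ}
    (hG : ∀ᶠ i in l, IntervalIntegrable (G i) volume a b) (hg : IntervalIntegrable g volume a b)
    (h : TendstoUniformlyOn G g l (Icc a b)) :
    TendstoUniformlyOn (fun i x => ∫ u in a..x, G i u) (fun x => ∫ u in a..x, g u) l
      (Icc a b) := by
  rw [Metric.tendstoUniformlyOn_iff] at h ⊢
  intro ε hε
  have hε' : 0 < ε / (|b - a| + 1) := by positivity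
  filter_upwards [h _ hε', hG] with i hi hGi x hx
  have hsub : uIcc a x ⊆ uIcc a b := uIcc_subset_uIcc_left (Icc_subset_uIcc hx)
  rw [dist_eq_norm, ← intervalIntegral.integral_sub (hg.mono_set hsub) (hGi.mono_set hsub)]
  calc ‖∫ u in a..x, g u - G i u‖ ≤ ε / (|b - a| + 1) * |x - a| :=
        intervalIntegral.norm_integral_le_of_norm_le_const fun u hu => by
          rw [uIoc_of_le hx.1] at hu
          simpa only [dist_eq_norm] using (hi u ⟨hu.1.le, hu.2.trans hx.2⟩).le
    _ < ε := by
        rw [div_mul_eq_mul_div, div_lt_iff₀ (by positivity)]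
        have : |x - a| ≤ |b - a| := by
          rw [abs_of_nonneg (sub_nonneg.2 hx.1), abs_of_nonneg (by linarith [hx.1, hx.2])]
          linarith [hx.2]
        nlinarith

theorem Continuous.comp_tendstoUniformlyOn_of_isBounded {ι α E Y : Type*}
    [PseudoMetricSpace E] [ProperSpace E] [UniformSpace Y] {φ : E → Y} (hφ : Continuous φ)
    {l : Filter ι} {s : Set α} {G : ι → α → E} {g : α → E} (h : TendstoUniformlyOn G g l s)
    (hg : IsBounded (g '' s)) :
    TendstoUniformlyOn (fun i x => φ (G i x)) (fun x => φ (g x)) l s := by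
  set K := cthickening 1 (g '' s)
  have hK : IsCompact K := isCompact_of_isClosed_isBounded isClosed_cthickening hg.cthickening
  refine (hK.uniformContinuousOn_of_continuous hφ.continuousOn).comp_tendstoUniformlyOn_eventually
    ?_ (fun x hx => self_subset_cthickening _ (mem_image_of_mem g hx)) h
  filter_upwards [Metric.tendstoUniformlyOn_iff.1 h 1 one_pos] with i hi x hx
  exact mem_cthickening_of_dist_le _ (g x) _ _ (mem_image_of_mem g hx)
    (dist_comm (G i x) (g x) ▸ (hi x hx).le)

theorem ContinuousOn.tendsto_nhdsWithin_of_subset_closure {X Y : Type*} [TopologicalSpace X]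
    [TopologicalSpace Y] [RegularSpace Y] {g : X → Y} {U S : Set X} {x : X} {L : Y}
    (hg : ContinuousOn g U) (hU : IsOpen U) (hS : U ⊆ closure S)
    (h : Tendsto g (𝓝[S] x) (𝓝 L)) : Tendsto g (𝓝[U] x) (𝓝 L) := by
  refine (closed_nhds_basis L).tendsto_right_iff.2 fun V ⟨hV, hVc⟩ => ?_
  obtain ⟨W, hWo, hxW, hWS⟩ := mem_nhdsWithin.1 (h hV)
  refine mem_nhdsWithin.2 ⟨W, hWo, hxW, fun y ⟨hyW, hyU⟩ => ?_⟩
  have hy : y ∈ closure (W ∩ S) := hWo.inter_closure ⟨hyW, hS hyU⟩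
  exact hVc.closure_subset_iff.2 (fun _ h => h)
    (((hg y hyU).continuousAt (hU.mem_nhds hyU)).continuousWithinAt.mem_closure hy hWS)

theorem AnalyticOnNhd.subset_closure_diff_preimage_zero {𝕜 E : Type*}
    [NontriviallyNormedField 𝕜] [NormedAddCommGroup E] [NormedSpace 𝕜 E] {f : 𝕜 → E}
    {U : Set 𝕜} (hf : AnalyticOnNhd 𝕜 f U) (hU : IsOpen U) (hUc : IsPreconnected U)
    (hf0 : ¬EqOn f 0 U) : U ⊆ closure (U \ f ⁻¹' {0}) := by
  intro w hw
  rcases (hf w hw).eventually_eq_zero_or_eventually_ne_zero with h | h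
  · exact (hf0 (hf.eqOn_zero_of_preconnected_of_eventuallyEq_zero hUc hw h)).elim
  · have : ∀ᶠ y in 𝓝[≠] w, y ∈ U \ f ⁻¹' {0} := by
      filter_upwards [h, eventually_nhdsWithin_of_eventually_nhds (hU.mem_nhds hw)] with y hy hyU
        using ⟨hyU, hy⟩
    exact mem_closure_iff_frequently.2 (this.frequently.filter_mono nhdsWithin_le_nhds)

theorem isLittleO_sub_sub_of_tendsto_deriv {g : ℂ → ℂ} {U : Set ℂ} (hU : Convex ℝ U)
    (hUo : IsOpen U) (hg : DifferentiableOn ℂ g U) {τ α : ℂ}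
    (hα : Tendsto (deriv g) (𝓝[U] τ) (𝓝 α)) {ι : Type*} {l : Filter ι} {a b : ι → ℂ}
    (ha : Tendsto a l (𝓝[U] τ)) (hb : Tendsto b l (𝓝[U] τ)) :
    (fun i => g (b i) - g (a i) - α * (b i - a i)) =o[l] fun i => b i - a i := by
  refine Asymptotics.IsLittleO.of_bound fun ε hε => ?_
  obtain ⟨δ, hδ, hδα⟩ := Metric.mem_nhdsWithin_iff.1 (hα (closedBall_mem_nhds α hε))
  have hD : U ∩ ball τ δ ∈ 𝓝[U] τ := inter_mem_nhdsWithin U (ball_mem_nhds τ hδ)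
  have hder : ∀ w ∈ U ∩ ball τ δ,
      HasDerivWithinAt (fun w => g w - α * w) (deriv g w - α) (U ∩ ball τ δ) w := fun w hw =>
    (((hg.differentiableAt (hUo.mem_nhds hw.1)).hasDerivAt).sub
      ((hasDerivAt_id' w).const_mul α |>.congr_deriv (mul_one α))).hasDerivWithinAt
  filter_upwards [ha hD, hb hD] with i hai hbi
  have := (hU.inter (convex_ball τ δ)).norm_image_sub_le_of_norm_hasDerivWithin_le hder
    (fun w hw => by simpa [dist_eq_norm] using hδα ⟨hw.2, hw.1⟩) hai hbi
  calc ‖g (b i) - g (a i) - α * (b i - a i)‖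
      = ‖g (b i) - α * b i - (g (a i) - α * a i)‖ := by ring_nf
    _ ≤ ε * ‖b i - a i‖ := this

theorem unitDisk_eq_ball : unitDisk = ball (0 : ℂ) 1 := by
  ext z; simp [unitDisk]

theorem isOpen_unitDisk : IsOpen unitDisk := unitDisk_eq_ball ▸ isOpen_ball

theorem convex_unitDisk : Convex ℝ unitDisk := unitDisk_eq_ball ▸ convex_ball 0 1

theorem dist_pos_of_mem_unitDisk {τ z : ℂ} (hτ : ‖τ‖ = 1) (hz : z ∈ unitDisk) : 0 < dist z τ :=
  dist_pos.2 fun h => (h ▸ hz : τ ∈ unitDisk).ne hτ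

theorem tendsto_ofReal_mul_nhdsWithin_unitDisk {τ : ℂ} (hτ : ‖τ‖ = 1) :
    Tendsto (fun r : ℝ => (r : ℂ) * τ) (𝓝[<] 1) (𝓝[unitDisk] τ) := by
  refine tendsto_nhdsWithin_iff.2 ⟨?_, ?_⟩
  · have : Continuous fun r : ℝ => (r : ℂ) * τ := by fun_prop
    simpa using (this.tendsto 1).mono_left nhdsWithin_le_nhds
  · filter_upwards [Ioo_mem_nhdsLT (zero_lt_one' ℝ)] with r hr
    simp [unitDisk, hτ, abs_of_pos hr.1, hr.2]

theorem norm_le_mul_dist_of_boundaryNullPoint {f : ℂ → ℂ} {τ : ℂ} (hτ : ‖τ‖ = 1)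
    (hf : DifferentiableOn ℂ f unitDisk) (hnull : BoundaryNullPoint f τ) {δ M : ℝ}
    (hM : ∀ w ∈ unitDisk ∩ ball τ δ, ‖deriv f w‖ ≤ M) :
    ∀ w ∈ unitDisk ∩ ball τ δ, ‖f w‖ ≤ M * dist w τ := by
  intro w hw
  have hD : Convex ℝ (unitDisk ∩ ball τ δ) := convex_unitDisk.inter (convex_ball τ δ)
  have hlip : ∀ v ∈ unitDisk ∩ ball τ δ, ‖f w - f v‖ ≤ M * ‖w - v‖ := fun v hv =>
    hD.norm_image_sub_le_of_norm_deriv_le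
      (fun u hu => hf.differentiableAt (isOpen_unitDisk.mem_nhds hu.1)) hM hv hw
  have hradial := tendsto_ofReal_mul_nhdsWithin_unitDisk hτ
  have hle := le_of_tendsto_of_tendsto ((tendsto_const_nhds (x := f w)).sub hnull).norm
    (((tendsto_const_nhds (x := w)).sub (hradial.mono_right nhdsWithin_le_nhds)).norm.const_mul M)
    ((hradial.eventually (inter_mem_nhdsWithin _ (ball_mem_nhds τ (pos_of_mem_ball hw.2)))).mono
      fun r hr => hlip _ hr)
  rwa [sub_zero, ← dist_eq_norm] at hle

section Semigroup

variable {F : ℝ → ℂ → ℂ} {f : ℂ → ℂ} {τ z : ℂ} {t : ℝ}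

def flowExponent (F : ℝ → ℂ → ℂ) (f : ℂ → ℂ) (z : ℂ) (s : ℝ) : ℂ :=
  ∫ u in (0 : ℝ)..s, deriv f (F u z)

theorem Generates.continuousOn_flow (hgen : Generates f F) (hz : z ∈ unitDisk) :
    ContinuousOn (fun s => F s z) (Ici 0) :=
  fun s hs => ((hgen z hz).2 s hs).continuousWithinAt

theorem continuousOn_deriv_comp_flow (hS : ContSemigroupOn F) (hf : DifferentiableOn ℂ f unitDisk)
    (hgen : Generates f F) (hz : z ∈ unitDisk) :
    ContinuousOn (fun u => deriv f (F u z)) (Ici 0) :=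
  (hf.analyticOnNhd isOpen_unitDisk).deriv.continuousOn.comp (hgen.continuousOn_flow hz)
    fun _ hu => hS.maps _ hu hz

theorem continuousOn_flowExponent (hS : ContSemigroupOn F) (hf : DifferentiableOn ℂ f unitDisk)
    (hgen : Generates f F) (hz : z ∈ unitDisk) (ht : 0 ≤ t) :
    ContinuousOn (flowExponent F f z) (Icc 0 t) := by
  have := intervalIntegral.continuousOn_primitive_interval (a := 0) (b := t) (μ := volume)
    ((continuousOn_deriv_comp_flow hS hf hgen hz).mono fun u hu => by simp_all).integrableOn_Icc
  rwa [uIcc_of_le ht] at this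

theorem generator_flow_eq_mul_exp (hS : ContSemigroupOn F) (hf : DifferentiableOn ℂ f unitDisk)
    (hgen : Generates f F) (hz : z ∈ unitDisk) (ht : 0 ≤ t) :
    f (F t z) = f z * cexp (-flowExponent F f z t) := by
  have hφ' : ∀ s ≥ 0, HasDerivWithinAt (fun s => f (F s z))
      (-deriv f (F s z) * f (F s z)) (Ici s) s := fun s hs => by
    have hfd := (hf.differentiableAt (isOpen_unitDisk.mem_nhds (hS.maps s hs hz))).hasDerivAt
    exact (hfd.comp_hasDerivWithinAt s (((hgen z hz).2 s hs).mono (Ici_subset_Ici.2 hs)))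
      |>.congr_deriv (by ring)
  have := eq_mul_exp_integral_of_hasDerivWithinAt (φ := fun s => f (F s z))
    (continuousOn_deriv_comp_flow hS hf hgen hz).neg
    (hf.continuousOn.comp (hgen.continuousOn_flow hz) fun _ hu => hS.maps _ hu hz) hφ' ht
  simpa only [(hgen z hz).1, Pi.neg_apply, intervalIntegral.integral_neg, flowExponent] using this

theorem flow_sub_self_eq (hS : ContSemigroupOn F) (hf : DifferentiableOn ℂ f unitDisk)
    (hgen : Generates f F) (hz : z ∈ unitDisk) (ht : 0 ≤ t) :
    F t z - z = -f z * ∫ u in (0 : ℝ)..t, cexp (-flowExponent F f z u) := by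
  have hcont := (hgen.continuousOn_flow hz).mono (Icc_subset_Ici_self : Icc 0 t ⊆ Ici 0)
  have hFTC : ∫ u in (0 : ℝ)..t, -f (F u z) = F t z - F 0 z :=
    intervalIntegral.integral_eq_sub_of_hasDeriv_right_of_le ht hcont
      (fun s hs => ((hgen z hz).2 s hs.1.le).mono (Ioi_subset_Ici hs.1.le))
      ((hf.continuousOn.comp hcont fun _ hu => hS.maps _ hu.1 hz).neg.intervalIntegrable_of_Icc ht)
  rw [(hgen z hz).1] at hFTC
  rw [← hFTC, ← intervalIntegral.integral_const_mul]
  refine intervalIntegral.integral_congr fun u hu => ?_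
  rw [uIcc_of_le ht] at hu
  simp only [generator_flow_eq_mul_exp hS hf hgen hz hu.1, neg_mul]

theorem deriv_flow_mul_generator (hS : ContSemigroupOn F) (hgen : Generates f F)
    (hz : z ∈ unitDisk) (ht : 0 ≤ t) :
    deriv (F t) z * f z = f (F t z) := by
  have hF0 := (hgen z hz).1
  have hshift : HasDerivWithinAt (fun s => F (t + s) z) (-f (F t z)) (Ici 0) 0 := by
    have hFt : HasDerivWithinAt (fun s => F s z) (-f (F t z)) (Ici 0) (t + 0) := by
      rw [add_zero]; exact (hgen z hz).2 t ht
    have := hFt.scomp (0 : ℝ) ((hasDerivAt_id' (0 : ℝ)).const_add t).hasDerivWithinAt (s := Ici 0)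
      fun s hs => by simp only [mem_Ici] at hs ⊢; linarith
    simpa [Function.comp_def] using this
  have hF0' : HasDerivWithinAt (fun s => F s z) (-f z) (Ici 0) 0 := by
    have := (hgen z hz).2 0 le_rfl
    rwa [hF0] at this
  have hcomp : HasDerivWithinAt (fun s => F t (F s z)) (deriv (F t) z * -f z) (Ici 0) 0 :=
    ((hS.holo t ht).differentiableAt (isOpen_unitDisk.mem_nhds hz)).hasDerivAt
      |>.comp_hasDerivWithinAt_of_eq 0 hF0' hF0.symm
  have := (uniqueDiffOn_Ici (0 : ℝ) 0 self_mem_Ici).eq_deriv _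
    (hshift.congr (fun s hs => (hS.comp s hs t ht z hz).symm) (by rw [add_zero, hF0])) hcomp
  linear_combination this

theorem deriv_deriv_flow_mul_generator (hS : ContSemigroupOn F)
    (hf : DifferentiableOn ℂ f unitDisk) (hgen : Generates f F) (hz : z ∈ unitDisk) (ht : 0 ≤ t) :
    deriv (deriv (F t)) z * f z = deriv (F t) z * (deriv f (F t z) - deriv f z) := by
  have hFt := (hS.holo t ht).analyticOnNhd isOpen_unitDisk
  have hfa := hf.analyticOnNhd isOpen_unitDisk
  have heq : (fun w => deriv (F t) w * f w) =ᶠ[𝓝 z] fun w => f (F t w) := by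
    filter_upwards [isOpen_unitDisk.mem_nhds hz] with w hw
      using deriv_flow_mul_generator hS hgen hw ht
  have hprod := (hFt.deriv z hz).differentiableAt.hasDerivAt.mul
    (hfa z hz).differentiableAt.hasDerivAt
  have hcomp := (hfa _ (hS.maps t ht hz)).differentiableAt.hasDerivAt.comp z
    (hFt z hz).differentiableAt.hasDerivAt
  linear_combination (hprod.congr_of_eventuallyEq heq.symm).unique hcomp

theorem deriv_flow_eq_exp (hS : ContSemigroupOn F) (hf : DifferentiableOn ℂ f unitDisk)
    (hgen : Generates f F) (hz : z ∈ unitDisk) (ht : 0 ≤ t) (hfz : f z ≠ 0) :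
    deriv (F t) z = cexp (-flowExponent F f z t) :=
  mul_right_cancel₀ hfz <| by
    rw [deriv_flow_mul_generator hS hgen hz ht, generator_flow_eq_mul_exp hS hf hgen hz ht,
      mul_comm]

theorem deriv_deriv_flow_eq (hS : ContSemigroupOn F) (hf : DifferentiableOn ℂ f unitDisk)
    (hgen : Generates f F) (hz : z ∈ unitDisk) (ht : 0 ≤ t) (hfz : f z ≠ 0) (α : ℂ) :
    deriv (deriv (F t)) z = cexp (-flowExponent F f z t) *
      (-(α * ∫ u in (0 : ℝ)..t, cexp (-flowExponent F f z u)) +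
        (deriv f (F t z) - deriv f z - α * (F t z - z)) / f z) := by
  have h := deriv_deriv_flow_mul_generator hS hf hgen hz ht
  rw [deriv_flow_eq_exp hS hf hgen hz ht hfz] at h
  rw [← mul_left_inj' hfz, h, flow_sub_self_eq hS hf hgen hz ht]
  field_simp
  ring

theorem eventually_forall_flow_mem (hS : ContSemigroupOn F) (hf : DifferentiableOn ℂ f unitDisk)
    (hgen : Generates f F) (hτ : ‖τ‖ = 1) (hnull : BoundaryNullPoint f τ)
    (hbdd : IsBoundedUnder (· ≤ ·) (𝓝[unitDisk] τ) fun w => ‖deriv f w‖)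
    {V : Set ℂ} (hV : V ∈ 𝓝[unitDisk] τ) :
    ∀ᶠ z in 𝓝[unitDisk] τ, ∀ s ∈ Icc 0 t, F s z ∈ V := by
  obtain ⟨M, hM⟩ := hbdd
  obtain ⟨δ, hδ, hδV⟩ := Metric.mem_nhdsWithin_iff.1 (inter_mem (eventually_map.1 hM) hV)
  set K := max M 0
  have hbound := norm_le_mul_dist_of_boundaryNullPoint hτ hf hnull (δ := δ) (M := K)
    fun w hw => ((hδV ⟨hw.2, hw.1⟩).1).trans (le_max_left M 0)
  have hnear : ball τ (δ * Real.exp (-((K + 1) * t))) ∈ 𝓝[unitDisk] τ :=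
    mem_nhdsWithin_of_mem_nhds (ball_mem_nhds τ (by positivity))
  filter_upwards [self_mem_nhdsWithin, hnear] with z hz hzτ s hs
  have hsmall : dist z τ * Real.exp ((K + 1) * t) < δ := by
    calc dist z τ * Real.exp ((K + 1) * t)
        < δ * Real.exp (-((K + 1) * t)) * Real.exp ((K + 1) * t) := by
          gcongr; exact mem_ball.1 hzτ
      _ = δ := by rw [mul_assoc, ← Real.exp_add, neg_add_cancel, Real.exp_zero, mul_one]
  have hFz := (hgen z hz).1
  have hgron := dist_le_mul_exp_of_hasDerivWithinAt (u := fun s => F s z) (p := τ)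
    (le_max_right M 0) ((hgen.continuousOn_flow hz).mono Icc_subset_Ici_self)
    (fun s hs => ((hgen z hz).2 s hs.1).mono (Ici_subset_Ici.2 hs.1))
    (fun s hs hsδ => by
      simpa only [norm_neg] using hbound _ ⟨hS.maps s hs.1 hz, mem_ball.2 hsδ⟩)
    (by rw [hFz]; exact dist_pos_of_mem_unitDisk hτ hz) (by rw [hFz]; exact hsmall) s hs
  rw [hFz] at hgron
  refine (hδV ⟨mem_ball.2 ?_, hS.maps s hs.1 hz⟩).2
  calc dist (F s z) τ ≤ dist z τ * Real.exp ((K + 1) * s) := hgron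
    _ ≤ dist z τ * Real.exp ((K + 1) * t) := by gcongr; exact hs.2
    _ < δ := hsmall

theorem tendsto_flow_nhdsWithin_unitDisk (hS : ContSemigroupOn F)
    (hf : DifferentiableOn ℂ f unitDisk) (hgen : Generates f F) (hτ : ‖τ‖ = 1)
    (hnull : BoundaryNullPoint f τ)
    (hbdd : IsBoundedUnder (· ≤ ·) (𝓝[unitDisk] τ) fun w => ‖deriv f w‖) (ht : 0 ≤ t) :
    Tendsto (F t) (𝓝[unitDisk] τ) (𝓝[unitDisk] τ) := fun _ hV =>
  (eventually_forall_flow_mem hS hf hgen hτ hnull hbdd hV).mono fun _ hz => hz t ⟨ht, le_rfl⟩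

theorem tendstoUniformlyOn_exp_neg_flowExponent (hS : ContSemigroupOn F)
    (hf : DifferentiableOn ℂ f unitDisk) (hgen : Generates f F) (hτ : ‖τ‖ = 1)
    (hnull : BoundaryNullPoint f τ) {β : ℂ} (hβ : Tendsto (deriv f) (𝓝[unitDisk] τ) (𝓝 β))
    (ht : 0 ≤ t) :
    TendstoUniformlyOn (fun z s => cexp (-flowExponent F f z s)) (fun s => cexp (-(β * s)))
      (𝓝[unitDisk] τ) (Icc 0 t) := by
  have hderiv : TendstoUniformlyOn (fun z u => deriv f (F u z)) (fun _ => β) (𝓝[unitDisk] τ)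
      (Icc 0 t) := tendstoUniformlyOn_comp_of_forall_eventually_mem
    (fun _ hV => eventually_forall_flow_mem hS hf hgen hτ hnull hβ.norm.isBoundedUnder_le hV) hβ
  have hexp : TendstoUniformlyOn (flowExponent F f) (fun s => β * s) (𝓝[unitDisk] τ)
      (Icc 0 t) := by
    refine (hderiv.intervalIntegral_primitive ?_ intervalIntegrable_const).congr_right ?_
    · filter_upwards [self_mem_nhdsWithin] with z hz
      exact ((continuousOn_deriv_comp_flow hS hf hgen hz).mono Icc_subset_Ici_self)
        |>.intervalIntegrable_of_Icc ht
    · intro s _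
      simp [mul_comm]
  exact (by fun_prop : Continuous fun w : ℂ => cexp (-w)).comp_tendstoUniformlyOn_of_isBounded hexp
    (isCompact_Icc.image (by fun_prop : Continuous fun s : ℝ => β * s)).isBounded

theorem tendsto_deriv_deriv_flow (hS : ContSemigroupOn F) (hf : DifferentiableOn ℂ f unitDisk)
    (hgen : Generates f F) (hτ : ‖τ‖ = 1) (hnull : BoundaryNullPoint f τ) {β α : ℂ}
    (hβ : Tendsto (deriv f) (𝓝[unitDisk] τ) (𝓝 β))
    (hα : Tendsto (deriv (deriv f)) (𝓝[unitDisk] τ) (𝓝 α)) (ht : 0 ≤ t) :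
    Tendsto (deriv (deriv (F t))) (𝓝[unitDisk \ f ⁻¹' {0}] τ)
      (𝓝 (cexp (-(β * t)) * -(α * ∫ u in (0 : ℝ)..t, cexp (-(β * u))))) := by
  have hl : 𝓝[unitDisk \ f ⁻¹' {0}] τ ≤ 𝓝[unitDisk] τ := nhdsWithin_mono τ sdiff_subset
  set J := fun z => ∫ u in (0 : ℝ)..t, cexp (-flowExponent F f z u)
  have hE := tendstoUniformlyOn_exp_neg_flowExponent hS hf hgen hτ hnull hβ ht
  have hderiv : Tendsto (fun z => cexp (-flowExponent F f z t)) (𝓝[unitDisk] τ)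
      (𝓝 (cexp (-(β * t)))) := hE.tendsto_at ⟨ht, le_rfl⟩
  have hJ : Tendsto J (𝓝[unitDisk] τ) (𝓝 (∫ u in (0 : ℝ)..t, cexp (-(β * u)))) := by
    rw [← uIcc_of_le ht] at hE
    refine hE.tendsto_intervalIntegral_of_continuousOn ?_
    filter_upwards [self_mem_nhdsWithin] with z hz
    rw [uIcc_of_le ht]
    exact continuous_exp.comp_continuousOn (continuousOn_flowExponent hS hf hgen hz ht).neg
  have hlo := isLittleO_sub_sub_of_tendsto_deriv convex_unitDisk isOpen_unitDisk
    (hf.analyticOnNhd isOpen_unitDisk).deriv.differentiableOn hα tendsto_id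
    (tendsto_flow_nhdsWithin_unitDisk hS hf hgen hτ hnull hβ.norm.isBoundedUnder_le ht)
  have hbig : (fun z => F t z - z) =O[𝓝[unitDisk \ f ⁻¹' {0}] τ] f := by
    have := (Asymptotics.isBigO_refl f _).mul ((hJ.mono_left hl).isBigO_one ℂ)
    simp only [mul_one] at this
    refine this.neg_left.congr' ?_ EventuallyEq.rfl
    filter_upwards [self_mem_nhdsWithin] with z hz
    rw [flow_sub_self_eq hS hf hgen hz.1 ht, neg_mul]
  have hrem := ((hlo.mono hl).trans_isBigO hbig).tendsto_div_nhds_zero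
  refine Tendsto.congr' ?_ (by
    simpa using (hderiv.mono_left hl).mul (((hJ.mono_left hl).const_mul α).neg.add hrem))
  filter_upwards [self_mem_nhdsWithin] with z ⟨hz, hfz⟩
  exact (deriv_deriv_flow_eq hS hf hgen hz ht hfz α).symm

theorem flow_eqOn_id_of_eqOn_zero (hS : ContSemigroupOn F)
    (hf : DifferentiableOn ℂ f unitDisk) (hgen : Generates f F) (hf0 : EqOn f 0 unitDisk)
    (ht : 0 ≤ t) : EqOn (F t) id unitDisk := fun z hz => by
  simpa [hf0 hz, sub_eq_zero] using flow_sub_self_eq hS hf hgen hz ht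

end Semigroup

theorem exp_mul_integral_exp_eq (β α : ℂ) (t : ℝ) :
    cexp (-(β * t)) * -(α * ∫ u in (0 : ℝ)..t, cexp (-(β * u))) =
      if β = 0 then -α * t else α / β * cexp (-β * t) * (cexp (-β * t) - 1) := by
  split_ifs with hβ
  · simp [hβ]
  · have hint : ∫ u in (0 : ℝ)..t, cexp (-(β * u)) = (cexp (-β * t) - 1) / -β := by
      simpa [neg_mul] using integral_exp_mul_complex (a := 0) (b := t) (neg_ne_zero.2 hβ)
    rw [hint, neg_mul]
    field_simp

theorem second_unrestricted_derivative_of_semigroup_general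
    (F : ℝ → ℂ → ℂ) (f : ℂ → ℂ)
    (hS : ContSemigroupOn F) (hf : DifferentiableOn ℂ f unitDisk)
    (hgen : Generates f F)
    (τ : ℂ) (hτ : ‖τ‖ = 1) (hnull : BoundaryNullPoint f τ)
    (β α : ℂ)
    (hβ : Tendsto (deriv f) (nhdsWithin τ unitDisk) (nhds β))
    (hα : Tendsto (deriv (deriv f)) (nhdsWithin τ unitDisk) (nhds α)) :
    ∀ t : ℝ, 0 ≤ t →
      Tendsto (deriv (deriv (F t))) (nhdsWithin τ unitDisk)
        (nhds (if β = 0 then -α * (t : ℂ)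
          else α / β * Complex.exp (-β * t) * (Complex.exp (-β * t) - 1))) := by
  intro t ht
  by_cases hf0 : EqOn f 0 unitDisk
  · have : (𝓝[unitDisk] τ).NeBot := (tendsto_ofReal_mul_nhdsWithin_unitDisk hτ).neBot
    have hdf : EqOn (deriv f) 0 unitDisk := by simpa using hf0.deriv isOpen_unitDisk
    have hddf : EqOn (deriv (deriv f)) 0 unitDisk := by simpa using hdf.deriv isOpen_unitDisk
    have hddF : EqOn (deriv (deriv (F t))) (fun _ => 0) unitDisk := by
      simpa using ((flow_eqOn_id_of_eqOn_zero hS hf hgen hf0 ht).deriv isOpen_unitDisk).deriv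
        isOpen_unitDisk
    obtain rfl : β = 0 := tendsto_nhds_unique hβ
      (tendsto_const_nhds.congr' hdf.eventuallyEq_nhdsWithin.symm)
    obtain rfl : α = 0 := tendsto_nhds_unique hα
      (tendsto_const_nhds.congr' hddf.eventuallyEq_nhdsWithin.symm)
    rw [if_pos rfl, neg_zero, zero_mul]
    exact tendsto_const_nhds.congr' hddF.eventuallyEq_nhdsWithin.symm
  · rw [← exp_mul_integral_exp_eq]
    exact ((hS.holo t ht).analyticOnNhd isOpen_unitDisk).deriv.deriv.continuousOn
      |>.tendsto_nhdsWithin_of_subset_closure isOpen_unitDisk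
        ((hf.analyticOnNhd isOpen_unitDisk).subset_closure_diff_preimage_zero isOpen_unitDisk
          convex_unitDisk.isPreconnected hf0)
        (tendsto_deriv_deriv_flow hS hf hgen hτ hnull hβ hα ht)

/-- Remark 3(ii): the unrestricted-limit version of Theorem 1(ii). -/
theorem second_unrestricted_derivative_of_semigroup
    (F : ℝ → ℂ → ℂ) (f : ℂ → ℂ)
    (hS : ContSemigroupOn F) (hf : DifferentiableOn ℂ f unitDisk)
    (hgen : Generates f F)
    (τ : ℂ) (hτ : ‖τ‖ = 1) (hnull : BoundaryNullPoint f τ)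
    (hF : ∀ t : ℝ, 0 < t → ∃ L : ℂ, Tendsto (F t) (nhdsWithin τ unitDisk) (nhds L))
    (β α : ℂ)
    (hβ : Tendsto (deriv f) (nhdsWithin τ unitDisk) (nhds β))
    (hα : Tendsto (deriv (deriv f)) (nhdsWithin τ unitDisk) (nhds α)) :
    ∀ t : ℝ, 0 ≤ t →
      Tendsto (deriv (deriv (F t))) (nhdsWithin τ unitDisk)
        (nhds (if β = 0 then -α * (t : ℂ)
          else α / β * Complex.exp (-β * t) * (Complex.exp (-β * t) - 1))) :=
  second_unrestricted_derivative_of_semigroup_general F f hS hf hgen τ hτ hnull β α hβ hα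
end
end

section
/- Let S₁ = {F_t}_{t≥0} and S₂ = {G_t}_{t≥0} be one-parameter continuous semigroups on Δ generated by holomorphic functions f and g respectively, and suppose F₁(G₁(z)) = G₁(F₁(z)) for all z ∈ Δ. Suppose f has an interior null point τ ∈ Δ (f(τ) = 0), and that there exist t₁ > 0 and t₂ > 0 such that F_{t₁} is not an automorphism of Δ and G_{t₂} is not an automorphism of Δ. Then the semigroups commute: F_t(G_s(z)) = G_s(F_t(z)) for all s, t ≥ 0 and z ∈ Δ. -/
/-!
Since `f τ = 0`, uniqueness for the flow equation shows that every `F t` fixes `τ`; conjugating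
both semigroups by the involution `mobius τ` we may assume `τ = 0`. As `F₁` is not an
automorphism, the Schwarz lemma gives `|F₁'(0)| < 1` and makes `0` the only fixed point of `F₁`;
hence `G₁` fixes `0`, and as `G₁` is not an automorphism either, so does every `G s`. The
semigroup law and the Schwarz lemma also give `F₁'(0) ≠ 0`, so Koenigs' theorem provides `h`
with `h(0) = 0`, `h'(0) = 1` and `h ∘ F₁ = F₁'(0) h`. Its uniqueness part shows that `h` also
linearizes every self-map fixing `0` that commutes with `F₁`: all `F t` and `G₁`, and then,
arguing with `G₁` in place of `F₁`, all `G s`. Thus `h ∘ F t ∘ G s = h ∘ G s ∘ F t`; since `h` is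
injective near `0`, the identity theorem gives `F t ∘ G s = G s ∘ F t`.
-/

open Complex Filter Set

noncomputable section

open Metric Topology

local notation "Δ" => unitDisk

lemma unitDisk_eq : Δ = ball (0 : ℂ) 1 := by
  ext z
  simp [unitDisk]

lemma isOpen_unitDisk_s6 : IsOpen Δ := unitDisk_eq ▸ isOpen_ball

lemma zero_mem_unitDisk : (0 : ℂ) ∈ Δ := by simp [unitDisk]

lemma convex_unitDisk_s6 : Convex ℝ Δ := unitDisk_eq ▸ convex_ball (0 : ℂ) 1

lemma closedBall_subset_unitDisk {r : ℝ} (hr : r < 1) : closedBall (0 : ℂ) r ⊆ Δ :=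
  unitDisk_eq ▸ closedBall_subset_ball hr

lemma unitDisk_mem_nhds_zero : Δ ∈ 𝓝 (0 : ℂ) := isOpen_unitDisk_s6.mem_nhds zero_mem_unitDisk

section Mobius

variable {τ : ℂ}

lemma mobius_denom_ne_zero (hτ : τ ∈ Δ) {z : ℂ} (hz : z ∈ Δ) :
    1 - (starRingEnd ℂ) τ * z ≠ 0 := by
  have : ‖(starRingEnd ℂ) τ * z‖ < 1 := by
    rw [norm_mul, RCLike.norm_conj]
    exact mul_lt_one_of_nonneg_of_lt_one_left (norm_nonneg τ) hτ hz.le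
  intro h
  rw [← sub_eq_zero.1 h, norm_one] at this
  exact this.false

lemma normSq_mobius_denom_sub_normSq_mobius_num (τ z : ℂ) :
    normSq (1 - (starRingEnd ℂ) τ * z) - normSq (τ - z) = (1 - normSq τ) * (1 - normSq z) := by
  apply ofReal_injective
  push_cast
  simp only [← mul_conj, map_sub, map_mul, map_one, conj_conj]
  ring

lemma mobius_mem_unitDisk (hτ : τ ∈ Δ) {z : ℂ} (hz : z ∈ Δ) : mobius τ z ∈ Δ := by
  have hd := mobius_denom_ne_zero hτ hz
  change ‖mobius τ z‖ < 1
  rw [mobius, norm_div, div_lt_one (norm_pos_iff.2 hd), ← sq_lt_sq₀ (norm_nonneg _) (norm_nonneg _),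
    ← normSq_eq_norm_sq, ← normSq_eq_norm_sq, ← sub_pos,
    normSq_mobius_denom_sub_normSq_mobius_num, normSq_eq_norm_sq, normSq_eq_norm_sq]
  have hτ' : ‖τ‖ < 1 := hτ
  have hz' : ‖z‖ < 1 := hz
  apply mul_pos <;> nlinarith [norm_nonneg τ, norm_nonneg z]

lemma mapsTo_mobius (hτ : τ ∈ Δ) : MapsTo (mobius τ) Δ Δ := fun _ hz ↦ mobius_mem_unitDisk hτ hz

lemma mobius_mobius (hτ : τ ∈ Δ) {z : ℂ} (hz : z ∈ Δ) : mobius τ (mobius τ z) = z := by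
  have hd := mobius_denom_ne_zero hτ hz
  have hτ' := mobius_denom_ne_zero hτ hτ
  unfold mobius
  set c := (starRingEnd ℂ) τ
  have hnum : τ - (τ - z) / (1 - c * z) = z * (1 - c * τ) / (1 - c * z) := by
    rw [eq_div_iff hd, sub_mul, div_mul_cancel₀ _ hd]; ring
  have hden : 1 - c * ((τ - z) / (1 - c * z)) = (1 - c * τ) / (1 - c * z) := by
    rw [eq_div_iff hd, sub_mul, mul_div_assoc', div_mul_cancel₀ _ hd]; ring
  rw [hnum, hden, div_div_div_cancel_right₀ hd, mul_div_assoc, div_self hτ', mul_one]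

lemma mobius_self (τ : ℂ) : mobius τ τ = 0 := by simp [mobius]

lemma mobius_zero (τ : ℂ) : mobius τ 0 = τ := by simp [mobius]

lemma differentiableOn_mobius (hτ : τ ∈ Δ) : DifferentiableOn ℂ (mobius τ) Δ :=
  (differentiableOn_const τ).sub differentiableOn_id |>.div
    ((differentiableOn_const 1).sub ((differentiableOn_const _).mul differentiableOn_id))
    fun _ hz ↦ mobius_denom_ne_zero hτ hz

lemma bijOn_mobius (hτ : τ ∈ Δ) : BijOn (mobius τ) Δ Δ :=
  InvOn.bijOn ⟨fun _ hz ↦ mobius_mobius hτ hz, fun _ hz ↦ mobius_mobius hτ hz⟩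
    (mapsTo_mobius hτ) (mapsTo_mobius hτ)

lemma bijOn_of_bijOn_mobius_conj {φ : ℂ → ℂ} (hτ : τ ∈ Δ) (hφ : MapsTo φ Δ Δ)
    (h : BijOn (fun z ↦ mobius τ (φ (mobius τ z))) Δ Δ) : BijOn φ Δ Δ :=
  ((bijOn_mobius hτ).comp (h.comp (bijOn_mobius hτ))).congr fun z hz ↦ by
    simp [mobius_mobius hτ hz, mobius_mobius hτ (hφ hz)]

end Mobius

section Schwarz

variable {φ : ℂ → ℂ}

lemma apply_eq_mul_dslope (h0 : φ 0 = 0) (z : ℂ) : φ z = z * dslope φ 0 z := by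
  simpa [h0] using (sub_smul_dslope φ 0 z).symm

lemma differentiableOn_dslope_zero (hd : DifferentiableOn ℂ φ Δ) :
    DifferentiableOn ℂ (dslope φ 0) Δ :=
  (differentiableOn_dslope unitDisk_mem_nhds_zero).2 hd

lemma mapsTo_ball_closedBall (hm : MapsTo φ Δ Δ) (h0 : φ 0 = 0) :
    MapsTo φ (ball 0 1) (closedBall (φ 0) 1) := by
  rw [h0, ← unitDisk_eq]
  exact fun z hz ↦ mem_closedBall_zero_iff.2 (hm hz).le

lemma norm_dslope_le_one (hd : DifferentiableOn ℂ φ Δ) (hm : MapsTo φ Δ Δ) (h0 : φ 0 = 0)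
    {z : ℂ} (hz : z ∈ Δ) : ‖dslope φ 0 z‖ ≤ 1 := by
  rw [unitDisk_eq] at hd hz
  simpa using Complex.norm_dslope_le_div_of_mapsTo_ball hd (mapsTo_ball_closedBall hm h0) hz

lemma eqOn_mul_of_norm_dslope_eq_one (hd : DifferentiableOn ℂ φ Δ) (hm : MapsTo φ Δ Δ)
    (h0 : φ 0 = 0) {w : ℂ} (hw : w ∈ Δ) (h1 : ‖dslope φ 0 w‖ = 1) :
    EqOn φ (fun z ↦ dslope φ 0 w * z) Δ := by
  rw [unitDisk_eq] at hd hw ⊢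
  intro z hz
  rw [Complex.affine_of_mapsTo_ball_of_norm_dslope_eq_div hd (mapsTo_ball_closedBall hm h0) hw
    (by rw [h1, div_one]) hz]
  simp [h0, mul_comm]

lemma bijOn_mul_unitDisk {c : ℂ} (hc : ‖c‖ = 1) : BijOn (c * ·) Δ Δ := by
  have hc0 : c ≠ 0 := norm_ne_zero_iff.1 (by rw [hc]; exact one_ne_zero)
  have hmaps : ∀ a : ℂ, ‖a‖ = 1 → MapsTo (a * ·) Δ Δ := fun a ha z hz ↦ by
    change ‖a * z‖ < 1
    rwa [norm_mul, ha, one_mul]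
  refine InvOn.bijOn ⟨fun z _ ↦ ?_, fun z _ ↦ ?_⟩ (hmaps c hc) (hmaps c⁻¹ (by simp [hc]))
  · simp [hc0]
  · simp [hc0]

lemma eqOn_id_of_apply_eq_self (hd : DifferentiableOn ℂ φ Δ) (hm : MapsTo φ Δ Δ) (h0 : φ 0 = 0)
    {w : ℂ} (hw : w ∈ Δ) (hw0 : w ≠ 0) (hfix : φ w = w) : EqOn φ id Δ := by
  have h1 : dslope φ 0 w = 1 := by
    rw [dslope_of_ne _ hw0, slope_def_field, hfix, h0, sub_zero, div_self hw0]
  intro z hz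
  simpa [h1] using eqOn_mul_of_norm_dslope_eq_one hd hm h0 hw (by rw [h1, norm_one]) hz

lemma eq_zero_of_apply_eq_self (hd : DifferentiableOn ℂ φ Δ) (hm : MapsTo φ Δ Δ) (h0 : φ 0 = 0)
    (hφ : ¬ BijOn φ Δ Δ) {w : ℂ} (hw : w ∈ Δ) (hfix : φ w = w) : w = 0 := by
  by_contra hw0
  exact hφ ((bijOn_id Δ).congr (eqOn_id_of_apply_eq_self hd hm h0 hw hw0 hfix).symm)

lemma norm_deriv_lt_one_of_not_bijOn (hd : DifferentiableOn ℂ φ Δ) (hm : MapsTo φ Δ Δ)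
    (h0 : φ 0 = 0) (hφ : ¬ BijOn φ Δ Δ) : ‖deriv φ 0‖ < 1 := by
  rw [← dslope_same]
  refine (norm_dslope_le_one hd hm h0 zero_mem_unitDisk).lt_of_ne fun h1 ↦ hφ ?_
  rw [dslope_same] at h1
  exact (bijOn_mul_unitDisk h1).congr
    (by simpa using (eqOn_mul_of_norm_dslope_eq_one hd hm h0 zero_mem_unitDisk
      (by rwa [dslope_same])).symm)

lemma norm_dslope_lt_one (hd : DifferentiableOn ℂ φ Δ) (hm : MapsTo φ Δ Δ) (h0 : φ 0 = 0)
    (hφ : ‖deriv φ 0‖ < 1) {w : ℂ} (hw : w ∈ Δ) : ‖dslope φ 0 w‖ < 1 := by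
  refine (norm_dslope_le_one hd hm h0 hw).lt_of_ne fun h1 ↦ hφ.ne ?_
  have hlin : φ =ᶠ[𝓝 0] fun z ↦ dslope φ 0 w * z :=
    eventually_of_mem unitDisk_mem_nhds_zero (eqOn_mul_of_norm_dslope_eq_one hd hm h0 hw h1)
  rw [hlin.deriv_eq, deriv_const_mul_field', deriv_id'']
  simpa using h1

lemma exists_norm_le_mul_of_norm_deriv_lt_one (hd : DifferentiableOn ℂ φ Δ)
    (hm : MapsTo φ Δ Δ) (h0 : φ 0 = 0) (hφ : ‖deriv φ 0‖ < 1) {r : ℝ} (hr : r < 1) :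
    ∃ k, 0 ≤ k ∧ k < 1 ∧ ∀ w ∈ closedBall (0 : ℂ) r, ‖φ w‖ ≤ k * ‖w‖ := by
  set R := max r 0
  have hR : closedBall (0 : ℂ) R ⊆ Δ := closedBall_subset_unitDisk (max_lt hr one_pos)
  obtain ⟨w₀, hw₀, hmax⟩ := (isCompact_closedBall (0 : ℂ) R).exists_isMaxOn
    (nonempty_closedBall.2 (le_max_right r 0))
    ((differentiableOn_dslope_zero hd).continuousOn.mono hR).norm
  refine ⟨‖dslope φ 0 w₀‖, norm_nonneg _, norm_dslope_lt_one hd hm h0 hφ (hR hw₀),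
    fun w hw ↦ ?_⟩
  rw [apply_eq_mul_dslope h0 w, norm_mul, mul_comm]
  exact mul_le_mul_of_nonneg_right (hmax (closedBall_subset_closedBall (le_max_left r 0) hw))
    (norm_nonneg w)

lemma norm_le_sq_of_deriv_eq_zero (hd : DifferentiableOn ℂ φ Δ) (hm : MapsTo φ Δ Δ)
    (h0 : φ 0 = 0) (h1 : deriv φ 0 = 0) {z : ℂ} (hz : z ∈ Δ) : ‖φ z‖ ≤ ‖z‖ ^ 2 := by
  have hslope : ‖dslope φ 0 z‖ ≤ ‖z‖ := by
    have hd' := differentiableOn_dslope_zero hd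
    rw [unitDisk_eq] at hd'
    refine Complex.norm_le_norm_of_mapsTo_ball hd' (fun w hw ↦ ?_) (by rw [dslope_same, h1]) hz
    exact mem_closedBall_zero_iff.2 (norm_dslope_le_one hd hm h0 (unitDisk_eq ▸ hw))
  rw [apply_eq_mul_dslope h0 z, norm_mul, sq]
  exact mul_le_mul_of_nonneg_left hslope (norm_nonneg z)

lemma mapsTo_closedBall_of_mapsTo_unitDisk (hd : DifferentiableOn ℂ φ Δ)
    (hm : MapsTo φ Δ Δ) (h0 : φ 0 = 0) {r : ℝ} (hr : r < 1) :
    MapsTo φ (closedBall 0 r) (closedBall 0 r) := fun w hw ↦ by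
  rw [unitDisk_eq] at hd
  refine mem_closedBall_zero_iff.2 ((Complex.norm_le_norm_of_mapsTo_ball hd ?_ h0
    (closedBall_subset_unitDisk hr hw)).trans (mem_closedBall_zero_iff.1 hw))
  simpa [h0] using mapsTo_ball_closedBall hm h0

end Schwarz

lemma exists_norm_le_mul_sq {W : ℂ → ℂ} (hd : DifferentiableOn ℂ W Δ) (h0 : W 0 = 0)
    (h1 : deriv W 0 = 0) {r : ℝ} (hr : r < 1) :
    ∃ M, 0 ≤ M ∧ ∀ w ∈ closedBall (0 : ℂ) r, ‖W w‖ ≤ M * ‖w‖ ^ 2 := by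
  have hV0 : dslope W 0 0 = 0 := by rw [dslope_same, h1]
  obtain ⟨M, hM⟩ := (isCompact_closedBall (0 : ℂ) r).exists_bound_of_continuousOn
    ((differentiableOn_dslope_zero (differentiableOn_dslope_zero hd)).continuousOn.mono
      (closedBall_subset_unitDisk hr))
  refine ⟨max M 0, le_max_right M 0, fun w hw ↦ ?_⟩
  rw [apply_eq_mul_dslope h0 w, apply_eq_mul_dslope hV0 w, ← mul_assoc, norm_mul, norm_mul,
    ← sq, mul_comm]
  exact mul_le_mul_of_nonneg_right ((hM w hw).trans (le_max_left M 0)) (by positivity)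

lemma prod_add_mul_pow_le {μ a k : ℝ} (hμ : 0 < μ) (ha : 0 ≤ a) (hk0 : 0 ≤ k) (hk1 : k < 1)
    (n : ℕ) : ∏ j ∈ Finset.range n, (μ + a * k ^ j) ≤ Real.exp (a / (μ * (1 - k))) * μ ^ n := by
  have hgeom : ∑ j ∈ Finset.range n, k ^ j ≤ 1 / (1 - k) := by
    have := geom_sum_Ico_le_of_lt_one (m := 0) (n := n) hk0 hk1
    rwa [← Finset.range_eq_Ico, pow_zero] at this
  calc ∏ j ∈ Finset.range n, (μ + a * k ^ j)
      ≤ ∏ j ∈ Finset.range n, (μ * Real.exp (a / μ * k ^ j)) := by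
        refine Finset.prod_le_prod (fun j _ ↦ by positivity) fun j _ ↦ ?_
        have := Real.add_one_le_exp (a / μ * k ^ j)
        calc μ + a * k ^ j = μ * (a / μ * k ^ j + 1) := by field_simp; ring
          _ ≤ μ * Real.exp (a / μ * k ^ j) := by gcongr
    _ = Real.exp (a / μ * ∑ j ∈ Finset.range n, k ^ j) * μ ^ n := by
        rw [Finset.prod_mul_distrib, Finset.prod_const, Finset.card_range, ← Real.exp_sum,
          Finset.mul_sum, mul_comm]
    _ ≤ Real.exp (a / μ * (1 / (1 - k))) * μ ^ n := by gcongr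
    _ = Real.exp (a / (μ * (1 - k))) * μ ^ n := by rw [mul_one_div, div_div]

lemma norm_iterate_le_pow_mul {E : Type*} [SeminormedAddCommGroup E] {φ : E → E} {r k : ℝ}
    (hk0 : 0 ≤ k) (hk1 : k ≤ 1) (hφ : ∀ w ∈ closedBall (0 : E) r, ‖φ w‖ ≤ k * ‖w‖) (n : ℕ)
    {z : E} (hz : z ∈ closedBall 0 r) : ‖φ^[n] z‖ ≤ k ^ n * ‖z‖ := by
  induction n with
  | zero => simp
  | succ n ih =>
    have hmem : φ^[n] z ∈ closedBall 0 r := mem_closedBall_zero_iff.2 <|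
      ih.trans <| (mul_le_of_le_one_left (norm_nonneg z) (pow_le_one₀ hk0 hk1)).trans
        (mem_closedBall_zero_iff.1 hz)
    rw [Function.iterate_succ_apply', pow_succ, mul_comm (k ^ n) k, mul_assoc]
    exact (hφ _ hmem).trans (mul_le_mul_of_nonneg_left ih hk0)

/-- The one-step factors `‖c‖ + M r kʲ` form a convergent product. -/
lemma norm_iterate_le_mul_pow {φ : ℂ → ℂ} {c : ℂ} {r k M : ℝ} (hc : c ≠ 0) (hr : 0 ≤ r)
    (hk0 : 0 ≤ k) (hk1 : k < 1) (hM : 0 ≤ M)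
    (hcontr : ∀ w ∈ closedBall (0 : ℂ) r, ‖φ w‖ ≤ k * ‖w‖)
    (hlin : ∀ w ∈ closedBall (0 : ℂ) r, ‖φ w - c * w‖ ≤ M * ‖w‖ ^ 2) (n : ℕ)
    {z : ℂ} (hz : z ∈ closedBall 0 r) :
    ‖φ^[n] z‖ ≤ Real.exp (M * r / (‖c‖ * (1 - k))) * ‖c‖ ^ n * ‖z‖ := by
  have hstep : ∀ j, ‖φ^[j + 1] z‖ ≤ (‖c‖ + M * r * k ^ j) * ‖φ^[j] z‖ := fun j ↦ by
    have hj := norm_iterate_le_pow_mul hk0 hk1.le hcontr j hz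
    have hzr : ‖z‖ ≤ r := mem_closedBall_zero_iff.1 hz
    have hjr : ‖φ^[j] z‖ ≤ r * k ^ j := hj.trans (by rw [mul_comm]; gcongr)
    set w := φ^[j] z
    have hw : w ∈ closedBall (0 : ℂ) r := mem_closedBall_zero_iff.2 <|
      hjr.trans (mul_le_of_le_one_right hr (pow_le_one₀ hk0 hk1.le))
    rw [Function.iterate_succ_apply']
    calc ‖φ w‖ ≤ ‖c * w‖ + ‖φ w - c * w‖ := norm_le_insert' _ _
      _ ≤ ‖c‖ * ‖w‖ + M * ‖w‖ * ‖w‖ := by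
        rw [norm_mul, mul_assoc, ← sq]; linarith [hlin w hw]
      _ ≤ (‖c‖ + M * r * k ^ j) * ‖w‖ := by
        rw [add_mul, mul_assoc M r]; gcongr
  have hprod : ‖φ^[n] z‖ ≤ (∏ j ∈ Finset.range n, (‖c‖ + M * r * k ^ j)) * ‖z‖ := by
    induction n with
    | zero => simp
    | succ n ih =>
      rw [Finset.prod_range_succ, mul_comm _ (‖c‖ + _), mul_assoc]
      exact (hstep n).trans (mul_le_mul_of_nonneg_left ih (by positivity))
  refine hprod.trans (mul_le_mul_of_nonneg_right ?_ (norm_nonneg z))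
  exact prod_add_mul_pow_le (norm_pos_iff.2 hc) (by positivity) hk0 hk1 n

lemma comp_iterate_eq_pow_mul {α M : Type*} [Monoid M] {φ : α → α} {W : α → M} {s : Set α}
    {c : M} (hm : MapsTo φ s s) (hW : ∀ z ∈ s, W (φ z) = c * W z) (n : ℕ) {z : α}
    (hz : z ∈ s) : W (φ^[n] z) = c ^ n * W z := by
  induction n with
  | zero => simp
  | succ n ih =>
    rw [Function.iterate_succ_apply', hW _ (hm.iterate n hz), ih, pow_succ', mul_assoc]

section Koenigs

variable {φ : ℂ → ℂ}

lemma exists_norm_sub_deriv_mul_le (hd : DifferentiableOn ℂ φ Δ) (h0 : φ 0 = 0) {r : ℝ}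
    (hr : r < 1) :
    ∃ M, 0 ≤ M ∧ ∀ w ∈ closedBall (0 : ℂ) r, ‖φ w - deriv φ 0 * w‖ ≤ M * ‖w‖ ^ 2 := by
  have hφ' : HasDerivAt φ (deriv φ 0) 0 :=
    (hd.differentiableAt unitDisk_mem_nhds_zero).hasDerivAt
  exact exists_norm_le_mul_sq (W := fun w ↦ φ w - deriv φ 0 * w)
    (hd.sub (differentiableOn_id.const_mul _)) (by simp [h0])
    (by simpa using (hφ'.fun_sub ((hasDerivAt_id 0).const_mul (deriv φ 0))).deriv) hr

lemma exists_norm_iterate_le (hd : DifferentiableOn ℂ φ Δ) (hm : MapsTo φ Δ Δ) (h0 : φ 0 = 0)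
    (hc0 : deriv φ 0 ≠ 0) (hc1 : ‖deriv φ 0‖ < 1) {r : ℝ} (hr0 : 0 ≤ r) (hr : r < 1) :
    ∃ K, 0 ≤ K ∧ ∀ n, ∀ z ∈ closedBall (0 : ℂ) r, ‖φ^[n] z‖ ≤ K * ‖deriv φ 0‖ ^ n * ‖z‖ := by
  obtain ⟨k, hk0, hk1, hcontr⟩ := exists_norm_le_mul_of_norm_deriv_lt_one hd hm h0 hc1 hr
  obtain ⟨M, hM, hlin⟩ := exists_norm_sub_deriv_mul_le hd h0 hr
  exact ⟨_, (Real.exp_pos _).le, fun n z hz ↦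
    norm_iterate_le_mul_pow hc0 hr0 hk0 hk1 hM hcontr hlin n hz⟩

/-- Uniqueness half of Koenigs' linearization theorem. -/
lemma eqOn_zero_of_comp_eq_mul (hd : DifferentiableOn ℂ φ Δ) (hm : MapsTo φ Δ Δ) (h0 : φ 0 = 0)
    (hc0 : deriv φ 0 ≠ 0) (hc1 : ‖deriv φ 0‖ < 1) {W : ℂ → ℂ} (hWd : DifferentiableOn ℂ W Δ)
    (hW0 : W 0 = 0) (hW1 : deriv W 0 = 0) (hW : ∀ z ∈ Δ, W (φ z) = deriv φ 0 * W z) :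
    EqOn W 0 Δ := by
  intro z hz
  have hz1 : ‖z‖ < 1 := hz
  have hzr : z ∈ closedBall (0 : ℂ) ‖z‖ := mem_closedBall_zero_iff.2 le_rfl
  obtain ⟨K, -, hK⟩ := exists_norm_iterate_le hd hm h0 hc0 hc1 (norm_nonneg z) hz1
  obtain ⟨M, hM, hsq⟩ := exists_norm_le_mul_sq hWd hW0 hW1 hz1
  set c := ‖deriv φ 0‖
  have hc : 0 < c := norm_pos_iff.2 hc0
  have hbound : ∀ n : ℕ, ‖W z‖ ≤ M * K ^ 2 * ‖z‖ ^ 2 * c ^ n := fun n ↦ by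
    have hit := comp_iterate_eq_pow_mul hm hW n hz
    have hmem := (mapsTo_closedBall_of_mapsTo_unitDisk hd hm h0 hz1).iterate n hzr
    refine le_of_mul_le_mul_left ?_ (pow_pos hc n)
    calc c ^ n * ‖W z‖ = ‖W (φ^[n] z)‖ := by rw [hit, norm_mul, norm_pow]
      _ ≤ M * ‖φ^[n] z‖ ^ 2 := hsq _ hmem
      _ ≤ M * (K * c ^ n * ‖z‖) ^ 2 := by gcongr; exact hK n z hzr
      _ = c ^ n * (M * K ^ 2 * ‖z‖ ^ 2 * c ^ n) := by ring
  have hlim : Tendsto (fun n : ℕ ↦ M * K ^ 2 * ‖z‖ ^ 2 * c ^ n) atTop (𝓝 0) := by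
    simpa using (tendsto_pow_atTop_nhds_zero_of_lt_one hc.le hc1).const_mul (M * K ^ 2 * ‖z‖ ^ 2)
  exact norm_le_zero_iff.1 (ge_of_tendsto' hlim hbound)

def koenigsApprox (φ : ℂ → ℂ) (n : ℕ) (z : ℂ) : ℂ := φ^[n] z / deriv φ 0 ^ n

/-- The limit of `koenigsApprox φ n`, written as a telescoping series. -/
def koenigsFunction (φ : ℂ → ℂ) (z : ℂ) : ℂ :=
  z + ∑' n, (koenigsApprox φ (n + 1) z - koenigsApprox φ n z)

lemma koenigsApprox_succ_sub (hc0 : deriv φ 0 ≠ 0) (n : ℕ) (z : ℂ) :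
    koenigsApprox φ (n + 1) z - koenigsApprox φ n z =
      (φ (φ^[n] z) - deriv φ 0 * φ^[n] z) / deriv φ 0 ^ (n + 1) := by
  rw [koenigsApprox, koenigsApprox, Function.iterate_succ_apply', pow_succ]
  field_simp

lemma koenigsApprox_eq_add_sum (n : ℕ) (z : ℂ) :
    koenigsApprox φ n z = z + ∑ j ∈ Finset.range n,
      (koenigsApprox φ (j + 1) z - koenigsApprox φ j z) := by
  rw [Finset.sum_range_sub (fun j ↦ koenigsApprox φ j z)]
  simp [koenigsApprox]

lemma tendstoUniformlyOn_koenigsApprox (hd : DifferentiableOn ℂ φ Δ) (hm : MapsTo φ Δ Δ)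
    (h0 : φ 0 = 0) (hc0 : deriv φ 0 ≠ 0) (hc1 : ‖deriv φ 0‖ < 1) {r : ℝ} (hr0 : 0 ≤ r)
    (hr : r < 1) :
    TendstoUniformlyOn (koenigsApprox φ) (koenigsFunction φ) atTop (closedBall 0 r) := by
  obtain ⟨K, hK0, hK⟩ := exists_norm_iterate_le hd hm h0 hc0 hc1 hr0 hr
  obtain ⟨M, hM, hlin⟩ := exists_norm_sub_deriv_mul_le hd h0 hr
  set c := ‖deriv φ 0‖
  have hc : 0 < c := norm_pos_iff.2 hc0
  have hbound : ∀ n, ∀ z ∈ closedBall (0 : ℂ) r,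
      ‖koenigsApprox φ (n + 1) z - koenigsApprox φ n z‖ ≤ M * K ^ 2 * r ^ 2 / c * c ^ n := by
    intro n z hz
    have hmem := (mapsTo_closedBall_of_mapsTo_unitDisk hd hm h0 hr).iterate n hz
    have hnK : ‖φ^[n] z‖ ≤ K * c ^ n * r :=
      (hK n z hz).trans (by gcongr; exact mem_closedBall_zero_iff.1 hz)
    rw [koenigsApprox_succ_sub hc0, norm_div, norm_pow, div_le_iff₀ (pow_pos hc _)]
    calc ‖φ (φ^[n] z) - deriv φ 0 * φ^[n] z‖ ≤ M * ‖φ^[n] z‖ ^ 2 := hlin _ hmem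
      _ ≤ M * (K * c ^ n * r) ^ 2 := by gcongr
      _ = M * K ^ 2 * r ^ 2 / c * c ^ n * c ^ (n + 1) := by field_simp; ring
  have hsum := tendstoUniformlyOn_tsum_nat
    ((summable_geometric_of_lt_one hc.le hc1).mul_left (M * K ^ 2 * r ^ 2 / c)) hbound
  rw [Metric.tendstoUniformlyOn_iff] at hsum ⊢
  refine fun ε hε ↦ (hsum ε hε).mono fun N hN z hz ↦ ?_
  rw [koenigsApprox_eq_add_sum, koenigsFunction, dist_add_left]
  exact hN z hz

lemma tendstoLocallyUniformlyOn_koenigsApprox (hd : DifferentiableOn ℂ φ Δ) (hm : MapsTo φ Δ Δ)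
    (h0 : φ 0 = 0) (hc0 : deriv φ 0 ≠ 0) (hc1 : ‖deriv φ 0‖ < 1) :
    TendstoLocallyUniformlyOn (koenigsApprox φ) (koenigsFunction φ) atTop Δ := by
  refine tendstoLocallyUniformlyOn_of_forall_exists_nhds fun z hz ↦ ?_
  have hz1 : ‖z‖ < 1 := hz
  refine ⟨closedBall 0 ((‖z‖ + 1) / 2), mem_nhdsWithin_of_mem_nhds
      (closedBall_mem_nhds_of_mem (mem_ball_zero_iff.2 (by linarith))),
    tendstoUniformlyOn_koenigsApprox hd hm h0 hc0 hc1 (by positivity) (by linarith)⟩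

structure IsKoenigsFunction (φ h : ℂ → ℂ) : Prop where
  differentiableOn : DifferentiableOn ℂ h Δ
  map_zero : h 0 = 0
  deriv_zero : deriv h 0 = 1
  comp_eq_mul : ∀ z ∈ Δ, h (φ z) = deriv φ 0 * h z

theorem isKoenigsFunction_koenigsFunction (hd : DifferentiableOn ℂ φ Δ) (hm : MapsTo φ Δ Δ)
    (h0 : φ 0 = 0) (hc0 : deriv φ 0 ≠ 0) (hc1 : ‖deriv φ 0‖ < 1) :
    IsKoenigsFunction φ (koenigsFunction φ) := by
  have hlim := tendstoLocallyUniformlyOn_koenigsApprox hd hm h0 hc0 hc1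
  have hdiff : ∀ᶠ n in atTop, DifferentiableOn ℂ (koenigsApprox φ n) Δ :=
    Eventually.of_forall fun n ↦ (hd.iterate hm n).div_const _
  have hφ' : HasDerivAt φ (deriv φ 0) 0 :=
    (hd.differentiableAt unitDisk_mem_nhds_zero).hasDerivAt
  refine ⟨hlim.differentiableOn hdiff isOpen_unitDisk_s6, by simp [koenigsFunction, koenigsApprox,
    Function.iterate_fixed h0], ?_, fun z hz ↦ ?_⟩
  · have hderiv : ∀ n, deriv (koenigsApprox φ n) 0 = 1 := fun n ↦ by
      change deriv (fun z ↦ φ^[n] z / deriv φ 0 ^ n) 0 = 1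
      rw [deriv_div_const, (hφ'.iterate _ h0 n).deriv, div_self (pow_ne_zero n hc0)]
    refine tendsto_nhds_unique ((hlim.deriv hdiff isOpen_unitDisk_s6).tendsto_at zero_mem_unitDisk) ?_
    simp [hderiv]
  · have hshift : ∀ n, koenigsApprox φ n (φ z) = deriv φ 0 * koenigsApprox φ (n + 1) z := by
      intro n
      simp only [koenigsApprox]
      rw [← Function.iterate_succ_apply, pow_succ]
      field_simp
    refine tendsto_nhds_unique (hlim.tendsto_at (hm hz)) ?_
    simp_rw [hshift]
    exact ((hlim.tendsto_at hz).comp (tendsto_add_atTop_nat 1)).const_mul _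

end Koenigs

namespace IsKoenigsFunction

variable {φ h : ℂ → ℂ}

lemma hasStrictDerivAt (hh : IsKoenigsFunction φ h) : HasStrictDerivAt h 1 0 := by
  simpa [hh.deriv_zero] using
    ((hh.differentiableOn.contDiffOn isOpen_unitDisk_s6).contDiffAt unitDisk_mem_nhds_zero
      (n := 1)).hasStrictDerivAt one_ne_zero

lemma of_commute (hd : DifferentiableOn ℂ φ Δ) (hm : MapsTo φ Δ Δ) (h0 : φ 0 = 0)
    (hc0 : deriv φ 0 ≠ 0) (hc1 : ‖deriv φ 0‖ < 1) (hh : IsKoenigsFunction φ h) {ψ : ℂ → ℂ}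
    (hψd : DifferentiableOn ℂ ψ Δ) (hψm : MapsTo ψ Δ Δ) (hψ0 : ψ 0 = 0)
    (hcomm : ∀ z ∈ Δ, φ (ψ z) = ψ (φ z)) : IsKoenigsFunction ψ h := by
  refine ⟨hh.differentiableOn, hh.map_zero, hh.deriv_zero, fun z hz ↦ ?_⟩
  have hh' : HasDerivAt h 1 0 := hh.hasStrictDerivAt.hasDerivAt
  have hψ' : HasDerivAt ψ (deriv ψ 0) 0 :=
    (hψd.differentiableAt unitDisk_mem_nhds_zero).hasDerivAt
  have hW' : HasDerivAt (fun z ↦ h (ψ z) - deriv ψ 0 * h z) (1 * deriv ψ 0 - deriv ψ 0 * 1) 0 :=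
    ((hψ0 ▸ hh').comp 0 hψ').fun_sub (hh'.const_mul (deriv ψ 0))
  have hW := eqOn_zero_of_comp_eq_mul hd hm h0 hc0 hc1
    (W := fun z ↦ h (ψ z) - deriv ψ 0 * h z)
    (hh.differentiableOn.comp hψd hψm |>.sub (hh.differentiableOn.const_mul _))
    (by simp [hψ0, hh.map_zero])
    (by rw [hW'.deriv]; ring)
    (fun w hw ↦ by
      rw [← hcomm w hw, hh.comp_eq_mul _ (hψm hw), hh.comp_eq_mul w hw]
      ring) hz
  exact sub_eq_zero.1 hW

end IsKoenigsFunction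

lemma eqOn_of_comp_eq_comp {h A B : ℂ → ℂ} {h' : ℂ} (hh : HasStrictDerivAt h h' 0) (hh' : h' ≠ 0)
    (hA : DifferentiableOn ℂ A Δ) (hB : DifferentiableOn ℂ B Δ) (hA0 : A 0 = 0) (hB0 : B 0 = 0)
    (hAB : ∀ z ∈ Δ, h (A z) = h (B z)) : EqOn A B Δ := by
  have hinv := hh.eventually_left_inverse hh'
  have hAt : Tendsto A (𝓝 0) (𝓝 0) := by
    simpa [hA0] using (hA.differentiableAt unitDisk_mem_nhds_zero).continuousAt.tendsto
  have hBt : Tendsto B (𝓝 0) (𝓝 0) := by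
    simpa [hB0] using (hB.differentiableAt unitDisk_mem_nhds_zero).continuousAt.tendsto
  have hev : A =ᶠ[𝓝 0] B := by
    filter_upwards [hAt.eventually hinv, hBt.eventually hinv, unitDisk_mem_nhds_zero]
      with z hzA hzB hz
    rw [← hzA, ← hzB, hAB z hz]
  exact (hA.analyticOnNhd isOpen_unitDisk_s6).eqOn_of_preconnected_of_eventuallyEq
    (hB.analyticOnNhd isOpen_unitDisk_s6) convex_unitDisk_s6.isPreconnected zero_mem_unitDisk hev

namespace ContSemigroupOn

variable {Φ : ℝ → ℂ → ℂ}

lemma apply_time_zero (hΦ : ContSemigroupOn Φ) {z : ℂ} (hz : z ∈ Δ) : Φ 0 z = z := by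
  have hcont : ContinuousAt (Φ 0) z :=
    (hΦ.holo 0 le_rfl).continuousOn.continuousAt (isOpen_unitDisk_s6.mem_nhds hz)
  have hev : (fun t ↦ Φ 0 (Φ t z)) =ᶠ[𝓝[>] 0] fun t ↦ Φ t z :=
    eventually_mem_nhdsWithin.mono fun t ht ↦ by
      simpa using (hΦ.comp t (le_of_lt ht) 0 le_rfl z hz).symm
  exact tendsto_nhds_unique ((hcont.tendsto.comp (hΦ.cont z hz)).congr' hev) (hΦ.cont z hz)

lemma commute (hΦ : ContSemigroupOn Φ) {s t : ℝ} (hs : 0 ≤ s) (ht : 0 ≤ t) {z : ℂ}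
    (hz : z ∈ Δ) : Φ s (Φ t z) = Φ t (Φ s z) := by
  rw [← hΦ.comp t ht s hs z hz, ← hΦ.comp s hs t ht z hz, add_comm]

lemma apply_natCast (hΦ : ContSemigroupOn Φ) (n : ℕ) {z : ℂ} (hz : z ∈ Δ) :
    Φ n z = (Φ 1)^[n] z := by
  induction n with
  | zero => simpa using hΦ.apply_time_zero hz
  | succ n ih =>
    rw [Nat.cast_succ, add_comm, hΦ.comp n n.cast_nonneg 1 zero_le_one z hz, ih,
      Function.iterate_succ_apply']

lemma bijOn_of_bijOn_one (hΦ : ContSemigroupOn Φ) (h1 : BijOn (Φ 1) Δ Δ) {t : ℝ} (ht : 0 ≤ t) :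
    BijOn (Φ t) Δ Δ := by
  set N : ℕ := ⌈t⌉₊
  have hNt : 0 ≤ (N : ℝ) - t := sub_nonneg.2 (Nat.le_ceil t)
  have hN : BijOn (Φ N) Δ Δ :=
    (h1.iterate N).congr fun z hz ↦ (hΦ.apply_natCast N hz).symm
  have hleft : EqOn (Φ N) (Φ (N - t) ∘ Φ t) Δ := fun z hz ↦ by
    rw [Function.comp_apply, ← hΦ.comp t ht _ hNt z hz, sub_add_cancel]
  have hright : EqOn (Φ N) (Φ t ∘ Φ (N - t)) Δ := fun z hz ↦ by
    rw [Function.comp_apply, ← hΦ.comp _ hNt t ht z hz, add_sub_cancel]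
  exact ⟨hΦ.maps t ht, (hN.injOn.congr hleft).of_comp,
    (hN.surjOn.congr hright).of_comp (hΦ.maps _ hNt)⟩

lemma mobius_conj (hΦ : ContSemigroupOn Φ) {τ : ℂ} (hτ : τ ∈ Δ) :
    ContSemigroupOn fun t z ↦ mobius τ (Φ t (mobius τ z)) where
  holo t ht := (differentiableOn_mobius hτ).comp
    ((hΦ.holo t ht).comp (differentiableOn_mobius hτ) (mapsTo_mobius hτ))
    ((hΦ.maps t ht).comp (mapsTo_mobius hτ))
  maps t ht := (mapsTo_mobius hτ).comp ((hΦ.maps t ht).comp (mapsTo_mobius hτ))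
  comp s hs t ht z hz := by
    rw [mobius_mobius hτ (hΦ.maps s hs (mapsTo_mobius hτ hz)),
      hΦ.comp s hs t ht _ (mapsTo_mobius hτ hz)]
  cont z hz := by
    have hm := mapsTo_mobius hτ hz
    have hcont : ContinuousAt (mobius τ) (mobius τ z) :=
      (differentiableOn_mobius hτ).continuousOn.continuousAt (isOpen_unitDisk_s6.mem_nhds hm)
    have := hcont.tendsto.comp (hΦ.cont _ hm)
    rwa [mobius_mobius hτ hz] at this

lemma deriv_apply_add (hΦ : ContSemigroupOn Φ) (h0 : ∀ t, 0 ≤ t → Φ t 0 = 0) {s t : ℝ}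
    (hs : 0 ≤ s) (ht : 0 ≤ t) : deriv (Φ (t + s)) 0 = deriv (Φ t) 0 * deriv (Φ s) 0 := by
  have hat : ∀ u, 0 ≤ u → DifferentiableAt ℂ (Φ u) 0 := fun u hu ↦
    (hΦ.holo u hu).differentiableAt unitDisk_mem_nhds_zero
  have hev : Φ (t + s) =ᶠ[𝓝 0] Φ t ∘ Φ s :=
    eventually_of_mem unitDisk_mem_nhds_zero fun z hz ↦ hΦ.comp s hs t ht z hz
  rw [hev.deriv_eq, deriv_comp 0 (by rw [h0 s hs]; exact hat t ht) (hat s hs), h0 s hs]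

/-- If `Φ t` had vanishing multiplier, so would all `Φ (t / 2 ^ n)`; by the Schwarz lemma
these would map `1/2` into the disk of radius `1/4`, against `Φ (t / 2 ^ n) (1/2) → 1/2`. -/
lemma deriv_ne_zero (hΦ : ContSemigroupOn Φ) (h0 : ∀ t, 0 ≤ t → Φ t 0 = 0) {t : ℝ}
    (ht : 0 < t) : deriv (Φ t) 0 ≠ 0 := by
  intro hzero
  have hpos : ∀ n : ℕ, 0 < t / 2 ^ n := fun n ↦ by positivity
  have hdyadic : ∀ n : ℕ, deriv (Φ (t / 2 ^ n)) 0 = 0 := by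
    intro n
    induction n with
    | zero => simpa using hzero
    | succ n ih =>
      have hsplit : t / 2 ^ n = t / 2 ^ (n + 1) + t / 2 ^ (n + 1) := by
        rw [pow_succ]; ring
      rw [hsplit, hΦ.deriv_apply_add h0 (hpos _).le (hpos _).le] at ih
      exact mul_self_eq_zero.1 ih
  have hhalf : (1 / 2 : ℂ) ∈ Δ := by change ‖(1 / 2 : ℂ)‖ < 1; norm_num
  have hsmall : ∀ n : ℕ, ‖Φ (t / 2 ^ n) (1 / 2)‖ ≤ 1 / 4 := fun n ↦ by
    have := norm_le_sq_of_deriv_eq_zero (hΦ.holo _ (hpos n).le) (hΦ.maps _ (hpos n).le)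
      (h0 _ (hpos n).le) (hdyadic n) hhalf
    norm_num at this ⊢
    exact this
  have htends : Tendsto (fun n : ℕ ↦ t / 2 ^ n) atTop (𝓝[>] 0) :=
    tendsto_nhdsWithin_iff.2 ⟨tendsto_const_nhds.div_atTop
      (tendsto_pow_atTop_atTop_of_one_lt one_lt_two), Eventually.of_forall hpos⟩
  have := le_of_tendsto' ((hΦ.cont _ hhalf).comp htends).norm hsmall
  norm_num at this

end ContSemigroupOn

theorem ODE_solution_eq_of_rest_point {E : Type*} [NormedAddCommGroup E] [NormedSpace ℝ E]
    {v : E → E} {U : Set E} {x₀ : E} {u : ℝ → E} (hv : LocallyLipschitzOn U v) (hx₀ : v x₀ = 0)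
    (hu0 : u 0 = x₀) (huU : ∀ t, 0 ≤ t → u t ∈ U)
    (hu : ∀ t, 0 ≤ t → HasDerivWithinAt u (v (u t)) (Ici 0) t) {T : ℝ} (hT : 0 ≤ T) :
    u T = x₀ := by
  have hcont : ContinuousOn u (Icc 0 T) := fun t ht ↦
    (hu t ht.1).continuousWithinAt.mono Icc_subset_Ici_self
  set K := u '' Icc 0 T
  have hx₀K : x₀ ∈ K := ⟨0, left_mem_Icc.2 hT, hu0⟩
  have hKU : K ⊆ U := image_subset_iff.2 fun t ht ↦ huU t ht.1
  obtain ⟨L, hL⟩ := (hv.mono hKU).exists_lipschitzOnWith_of_compact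
    (isCompact_Icc.image_of_continuousOn hcont)
  refine ODE_solution_unique_of_mem_Icc_right (v := fun _ ↦ v) (s := fun _ ↦ K) (fun _ _ ↦ hL)
    hcont (fun t ht ↦ (hu t ht.1).mono (Ici_subset_Ici.2 ht.1))
    (fun t ht ↦ mem_image_of_mem u (Ico_subset_Icc_self ht)) continuousOn_const
    (fun t _ ↦ by rw [hx₀]; exact hasDerivWithinAt_const _ _ _) (fun _ _ ↦ hx₀K) hu0
    (right_mem_Icc.2 hT)

namespace ContSemigroupOn

variable {Φ Ψ : ℝ → ℂ → ℂ}

lemma not_bijOn_mobius_conj_one (hΦ : ContSemigroupOn Φ) {τ : ℂ} (hτ : τ ∈ Δ) {t : ℝ}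
    (ht : 0 ≤ t) (haut : ¬ IsDiskAutomorphism (Φ t)) :
    ¬ BijOn (fun z ↦ mobius τ (Φ 1 (mobius τ z))) Δ Δ := fun h ↦
  haut ⟨hΦ.holo t ht, bijOn_of_bijOn_mobius_conj hτ (hΦ.maps t ht)
    ((hΦ.mobius_conj hτ).bijOn_of_bijOn_one h ht)⟩

lemma isKoenigsFunction_of_commute (hΦ : ContSemigroupOn Φ) (h0 : ∀ t, 0 ≤ t → Φ t 0 = 0)
    (h1 : ¬ BijOn (Φ 1) Δ Δ) {h : ℂ → ℂ} (hh : IsKoenigsFunction (Φ 1) h) {ψ : ℂ → ℂ}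
    (hψd : DifferentiableOn ℂ ψ Δ) (hψm : MapsTo ψ Δ Δ) (hψ0 : ψ 0 = 0)
    (hcomm : ∀ z ∈ Δ, Φ 1 (ψ z) = ψ (Φ 1 z)) : IsKoenigsFunction ψ h :=
  hh.of_commute (hΦ.holo 1 zero_le_one) (hΦ.maps 1 zero_le_one) (h0 1 zero_le_one)
    (hΦ.deriv_ne_zero h0 one_pos)
    (norm_deriv_lt_one_of_not_bijOn (hΦ.holo 1 zero_le_one) (hΦ.maps 1 zero_le_one)
      (h0 1 zero_le_one) h1) hψd hψm hψ0 hcomm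

lemma isKoenigsFunction (hΦ : ContSemigroupOn Φ) (h0 : ∀ t, 0 ≤ t → Φ t 0 = 0)
    (h1 : ¬ BijOn (Φ 1) Δ Δ) {h : ℂ → ℂ} (hh : IsKoenigsFunction (Φ 1) h) {t : ℝ}
    (ht : 0 ≤ t) : IsKoenigsFunction (Φ t) h :=
  hΦ.isKoenigsFunction_of_commute h0 h1 hh (hΦ.holo t ht) (hΦ.maps t ht) (h0 t ht)
    fun _ hz ↦ hΦ.commute zero_le_one ht hz

theorem commute_of_apply_zero (hΦ : ContSemigroupOn Φ) (hΨ : ContSemigroupOn Ψ)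
    (hΦ0 : ∀ t, 0 ≤ t → Φ t 0 = 0) (hΦ1 : ¬ BijOn (Φ 1) Δ Δ) (hΨ1 : ¬ BijOn (Ψ 1) Δ Δ)
    (hcomm : ∀ z ∈ Δ, Φ 1 (Ψ 1 z) = Ψ 1 (Φ 1 z)) {s t : ℝ} (hs : 0 ≤ s) (ht : 0 ≤ t) :
    EqOn (Φ t ∘ Ψ s) (Ψ s ∘ Φ t) Δ := by
  have hΨ10 : Ψ 1 0 = 0 :=
    eq_zero_of_apply_eq_self (hΦ.holo 1 zero_le_one) (hΦ.maps 1 zero_le_one) (hΦ0 1 zero_le_one)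
      hΦ1 (hΨ.maps 1 zero_le_one zero_mem_unitDisk)
      (by rw [hcomm 0 zero_mem_unitDisk, hΦ0 1 zero_le_one])
  have hΨ0 : ∀ s, 0 ≤ s → Ψ s 0 = 0 := fun s hs ↦
    eq_zero_of_apply_eq_self (hΨ.holo 1 zero_le_one) (hΨ.maps 1 zero_le_one) hΨ10 hΨ1
      (hΨ.maps s hs zero_mem_unitDisk) (by rw [hΨ.commute zero_le_one hs zero_mem_unitDisk, hΨ10])
  have hk := isKoenigsFunction_koenigsFunction (hΦ.holo 1 zero_le_one) (hΦ.maps 1 zero_le_one)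
    (hΦ0 1 zero_le_one) (hΦ.deriv_ne_zero hΦ0 one_pos) (norm_deriv_lt_one_of_not_bijOn
      (hΦ.holo 1 zero_le_one) (hΦ.maps 1 zero_le_one) (hΦ0 1 zero_le_one) hΦ1)
  have hkΨ := hΦ.isKoenigsFunction_of_commute hΦ0 hΦ1 hk (hΨ.holo 1 zero_le_one)
    (hΨ.maps 1 zero_le_one) hΨ10 hcomm
  have hkΦt := hΦ.isKoenigsFunction hΦ0 hΦ1 hk ht
  have hkΨs := hΨ.isKoenigsFunction hΨ0 hΨ1 hkΨ hs
  refine eqOn_of_comp_eq_comp hk.hasStrictDerivAt one_ne_zero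
    ((hΦ.holo t ht).comp (hΨ.holo s hs) (hΨ.maps s hs))
    ((hΨ.holo s hs).comp (hΦ.holo t ht) (hΦ.maps t ht))
    (by simp [hΨ0 s hs, hΦ0 t ht]) (by simp [hΨ0 s hs, hΦ0 t ht]) fun z hz ↦ ?_
  simp only [Function.comp_apply]
  rw [hkΦt.comp_eq_mul _ (hΨ.maps s hs hz), hkΨs.comp_eq_mul z hz,
    hkΨs.comp_eq_mul _ (hΦ.maps t ht hz), hkΦt.comp_eq_mul z hz, mul_left_comm]

end ContSemigroupOn

theorem commuting_semigroups_dilation_case_general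
    (F G : ℝ → ℂ → ℂ) (f : ℂ → ℂ)
    (hSF : ContSemigroupOn F) (hSG : ContSemigroupOn G)
    (hf : DifferentiableOn ℂ f unitDisk)
    (hgenF : Generates f F)
    (hcomm : ∀ z ∈ unitDisk, F 1 (G 1 z) = G 1 (F 1 z))
    (τ : ℂ) (hτ : τ ∈ unitDisk) (hτf : f τ = 0)
    (t₁ : ℝ) (ht₁ : 0 < t₁) (hFaut : ¬ IsDiskAutomorphism (F t₁))
    (t₂ : ℝ) (ht₂ : 0 < t₂) (hGaut : ¬ IsDiskAutomorphism (G t₂)) :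
    ∀ s : ℝ, 0 ≤ s → ∀ t : ℝ, 0 ≤ t → ∀ z ∈ unitDisk,
      F t (G s z) = G s (F t z) := by
  intro s hs t ht z hz
  have hlip : LocallyLipschitzOn Δ fun w ↦ -f w :=
    (((hf.contDiffOn isOpen_unitDisk_s6).restrict_scalars ℝ).neg (n := 1)).locallyLipschitzOn
      convex_unitDisk_s6
  have hFτ : ∀ t, 0 ≤ t → F t τ = τ := fun t ht ↦
    ODE_solution_eq_of_rest_point hlip (by simp [hτf]) (hgenF τ hτ).1
      (fun t ht ↦ hSF.maps t ht hτ) (hgenF τ hτ).2 ht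
  have hconj := (hSF.mobius_conj hτ).commute_of_apply_zero (hSG.mobius_conj hτ)
    (fun t ht ↦ by rw [mobius_zero, hFτ t ht, mobius_self])
    (hSF.not_bijOn_mobius_conj_one hτ ht₁.le hFaut) (hSG.not_bijOn_mobius_conj_one hτ ht₂.le hGaut)
    (fun w hw ↦ by
      rw [mobius_mobius hτ (hSG.maps 1 zero_le_one (mapsTo_mobius hτ hw)),
        mobius_mobius hτ (hSF.maps 1 zero_le_one (mapsTo_mobius hτ hw)),
        hcomm _ (mapsTo_mobius hτ hw)])
    hs ht (mapsTo_mobius hτ hz)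
  simp only [Function.comp_apply, mobius_mobius hτ hz, mobius_mobius hτ (hSG.maps s hs hz),
    mobius_mobius hτ (hSF.maps t ht hz)] at hconj
  rw [← mobius_mobius hτ (hSF.maps t ht (hSG.maps s hs hz)), hconj,
    mobius_mobius hτ (hSG.maps s hs (hSF.maps t ht hz))]

/-- Theorem 2(i) (dilation case): if the generator of `S₁` has an interior null point and
neither semigroup consists of automorphisms, then commutativity of `F₁` and `G₁` implies
that the semigroups commute. -/
theorem commuting_semigroups_dilation_case
    (F G : ℝ → ℂ → ℂ) (f g : ℂ → ℂ)
    (hSF : ContSemigroupOn F) (hSG : ContSemigroupOn G)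
    (hf : DifferentiableOn ℂ f unitDisk) (hg : DifferentiableOn ℂ g unitDisk)
    (hgenF : Generates f F) (hgenG : Generates g G)
    (hcomm : ∀ z ∈ unitDisk, F 1 (G 1 z) = G 1 (F 1 z))
    (τ : ℂ) (hτ : τ ∈ unitDisk) (hτf : f τ = 0)
    (t₁ : ℝ) (ht₁ : 0 < t₁) (hFaut : ¬ IsDiskAutomorphism (F t₁))
    (t₂ : ℝ) (ht₂ : 0 < t₂) (hGaut : ¬ IsDiskAutomorphism (G t₂)) :
    ∀ s : ℝ, 0 ≤ s → ∀ t : ℝ, 0 ≤ t → ∀ z ∈ unitDisk,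
      F t (G s z) = G s (F t z) :=
  commuting_semigroups_dilation_case_general F G f hSF hSG hf hgenF hcomm τ hτ hτf t₁ ht₁ hFaut t₂
    ht₂ hGaut
end
end
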